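/- Let n ≥ 1 be an integer and let u₁, …, uₙ, v₁, …, vₙ ≥ 1 and N ≥ 1 be integers with v₁ + ⋯ + vₙ ≥ N + 1. Then ∫_{(0,1)ⁿ} x₁^{u₁−1}⋯xₙ^{uₙ−1}(1−x₁)^{v₁−1}⋯(1−xₙ)^{vₙ−1}/(1 − x₁⋯xₙ)^N dx₁⋯dxₙ = Σ_{k=0}^∞ C(k+N−1, N−1) · ∏_{i=1}^n [(vᵢ−1)! · (k+uᵢ−1)! / (k+uᵢ+vᵢ−1)!], where C(·,·) denotes the binomial coefficient; in particular, the series on the right-hand side converges. -/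

import Mathlib

open MeasureTheory

/-- The open unit cube `(0,1)^n` in `ℝ^n`. -/
def unitCube (n : ℕ) : Set (Fin n → ℝ) := Set.univ.pi fun _ => Set.Ioo (0 : ℝ) 1

open Set
open scoped Nat

/-! On the cube, expand `(1 - x₁⋯xₙ)^(-N)` as the binomial series `∑ C(k+N-1, N-1) (x₁⋯xₙ)^k`.
By Fubini the `k`-th term integrates to a product of Beta integrals
`B(a, b) = a! b! / (a+b+1)!`, which follow from the recursion `B(a, b+1) = B(a, b) - B(a+1, b)`.
Since `B(k+a, b) ≤ b!/(k+1)^(b+1)` and `C(k+N-1, N-1) ≤ (k+1)^(N-1)`, the `k`-th term is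
`O((k+1)^(N-1-∑vᵢ)) = O(1/(k+1)²)`; the series of integrals of these nonnegative terms converges,
which justifies integrating termwise. -/

theorem integral_pow_mul_one_sub_pow (a b : ℕ) :
    ∫ x in (0 : ℝ)..1, x ^ a * (1 - x) ^ b = (a ! * b ! / (a + b + 1)! : ℝ) := by
  induction b generalizing a with
  | zero =>
    simp [Nat.factorial_succ, field]
  | succ b ih =>
    have hsplit : ∀ x : ℝ,
        x ^ a * (1 - x) ^ (b + 1) = x ^ a * (1 - x) ^ b - x ^ (a + 1) * (1 - x) ^ b :=
      fun x => by ring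
    simp_rw [hsplit]
    rw [intervalIntegral.integral_sub (by apply Continuous.intervalIntegrable; fun_prop)
      (by apply Continuous.intervalIntegrable; fun_prop), ih, ih,
      show a + 1 + b + 1 = a + b + 1 + 1 by ring, show a + (b + 1) + 1 = a + b + 1 + 1 by ring,
      Nat.factorial_succ (a + b + 1), Nat.factorial_succ a, Nat.factorial_succ b]
    push_cast
    field_simp
    ring

theorem setIntegral_Ioo_pow_mul_one_sub_pow (a b : ℕ) :
    ∫ x in Ioo (0 : ℝ) 1, x ^ a * (1 - x) ^ b = (a ! * b ! / (a + b + 1)! : ℝ) := by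
  rw [← integral_Ioc_eq_integral_Ioo, ← intervalIntegral.integral_of_le zero_le_one,
    integral_pow_mul_one_sub_pow]

theorem integrableOn_Ioo_pow_mul_one_sub_pow (a b : ℕ) :
    IntegrableOn (fun x : ℝ => x ^ a * (1 - x) ^ b) (Ioo 0 1) :=
  (by fun_prop : Continuous fun x : ℝ => x ^ a * (1 - x) ^ b).integrableOn_Icc.mono_set
    Ioo_subset_Icc_self

theorem volume_restrict_unitCube (n : ℕ) :
    volume.restrict (unitCube n) = Measure.pi fun _ : Fin n => volume.restrict (Ioo (0 : ℝ) 1) :=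
  Measure.restrict_pi_pi _ _

theorem integrableOn_unitCube_prod_pow_mul_one_sub_pow {n : ℕ} (a b : Fin n → ℕ) :
    IntegrableOn (fun x : Fin n → ℝ => ∏ i, x i ^ a i * (1 - x i) ^ b i) (unitCube n) := by
  rw [IntegrableOn, volume_restrict_unitCube]
  exact Integrable.fintype_prod (f := fun i t => t ^ a i * (1 - t) ^ b i)
    fun i => integrableOn_Ioo_pow_mul_one_sub_pow _ _

theorem setIntegral_unitCube_prod_pow_mul_one_sub_pow {n : ℕ} (a b : Fin n → ℕ) :
    ∫ x in unitCube n, ∏ i, x i ^ a i * (1 - x i) ^ b i =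
      ∏ i, ((a i)! * (b i)! / (a i + b i + 1)! : ℝ) := by
  rw [volume_restrict_unitCube,
    integral_fintype_prod_eq_prod (f := fun i t => t ^ a i * (1 - t) ^ b i)]
  simp only [setIntegral_Ioo_pow_mul_one_sub_pow]

theorem hasSum_choose_mul_prod_pow {ι : Type*} [Fintype ι] [Nonempty ι] {x : ι → ℝ}
    (hx : ∀ i, x i ∈ Ioo 0 1) (a b : ι → ℕ) (M : ℕ) :
    HasSum (fun k => ((k + M).choose M : ℝ) * ∏ i, x i ^ (k + a i) * (1 - x i) ^ b i)
      ((∏ i, x i ^ a i * (1 - x i) ^ b i) / (1 - ∏ i, x i) ^ (M + 1)) := by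
  have hnorm : ‖∏ i, x i‖ < 1 := by
    rw [Real.norm_of_nonneg (Finset.prod_nonneg fun i _ => (hx i).1.le)]
    simpa using Finset.prod_lt_prod_of_nonempty (fun i _ => (hx i).1) (fun i _ => (hx i).2)
      (Finset.univ_nonempty (α := ι))
  have key := (hasSum_choose_mul_geometric_of_norm_lt_one M hnorm).mul_right
    (∏ i, x i ^ a i * (1 - x i) ^ b i)
  rw [one_div_mul_eq_div] at key
  refine key.congr_fun fun k => ?_
  simp only [pow_add, mul_assoc, Finset.prod_mul_distrib, Finset.prod_pow]

theorem factorial_mul_factorial_div_factorial_le (k a b : ℕ) :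
    ((k + a)! * b ! / (k + a + b + 1)! : ℝ) ≤ b ! / ((k : ℝ) + 1) ^ (b + 1) := by
  have hfac : (k + a)! * (k + 1) ^ (b + 1) ≤ (k + a + b + 1)! :=
    (Nat.mul_le_mul_left _ (Nat.pow_le_pow_left (by omega) _)).trans
      Nat.factorial_mul_pow_le_factorial
  rw [div_le_div_iff₀ (by positivity) (by positivity)]
  calc ((k + a)! * b ! * ((k : ℝ) + 1) ^ (b + 1) : ℝ)
      = b ! * ((k + a)! * ((k : ℝ) + 1) ^ (b + 1)) := by ring
    _ ≤ b ! * (k + a + b + 1)! := by gcongr; exact_mod_cast hfac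

theorem summable_choose_mul_prod_factorial {ι : Type*} [Fintype ι] (a b : ι → ℕ) (M : ℕ)
    (h : M + 2 ≤ ∑ i, (b i + 1)) :
    Summable fun k : ℕ => ((k + M).choose M : ℝ) *
      ∏ i, ((k + a i)! * (b i)! / (k + a i + b i + 1)! : ℝ) := by
  set C : ℝ := ∏ i, ((b i)! : ℝ)
  have hbound (k : ℕ) : ((k + M).choose M : ℝ) *
      ∏ i, ((k + a i)! * (b i)! / (k + a i + b i + 1)! : ℝ) ≤ C * (1 / ((k : ℝ) + 1) ^ 2) := by
    have hk : (1 : ℝ) ≤ k + 1 := by linarith [k.cast_nonneg (α := ℝ)]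
    have hchoose : ((k + M).choose M : ℝ) ≤ ((k : ℝ) + 1) ^ M := by
      exact_mod_cast Nat.choose_add_le_add_one_pow k M
    have hprod : ∏ i, ((k + a i)! * (b i)! / (k + a i + b i + 1)! : ℝ) ≤
        C / ((k : ℝ) + 1) ^ ∑ i, (b i + 1) := by
      rw [← Finset.prod_pow_eq_pow_sum, ← Finset.prod_div_distrib]
      exact Finset.prod_le_prod (fun i _ => by positivity)
        fun i _ => factorial_mul_factorial_div_factorial_le k (a i) (b i)
    calc _ ≤ ((k : ℝ) + 1) ^ M * (C / ((k : ℝ) + 1) ^ ∑ i, (b i + 1)) :=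
          mul_le_mul hchoose hprod (by positivity) (by positivity)
      _ = C / ((k : ℝ) + 1) ^ (∑ i, (b i + 1) - M) := by
          rw [pow_sub₀ _ (by positivity) (by omega)]
          field_simp
      _ ≤ C * (1 / ((k : ℝ) + 1) ^ 2) := by
          rw [← div_eq_mul_one_div]
          gcongr
          omega
  have hsq : Summable fun k : ℕ => 1 / ((k : ℝ) + 1) ^ 2 := by
    simpa using (summable_nat_add_iff 1).mpr (Real.summable_one_div_nat_pow.mpr one_lt_two)
  exact Summable.of_nonneg_of_le (fun k => by positivity) hbound (hsq.mul_left C)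

/- Stated with the shifted exponents `aᵢ = uᵢ - 1`, `bᵢ = vᵢ - 1`, `M = N - 1`, so that no
truncated subtraction occurs. -/
theorem hasSum_setIntegral_unitCube {n : ℕ} (a b : Fin n → ℕ) (M : ℕ)
    (h : M + 2 ≤ ∑ i, (b i + 1)) :
    HasSum (fun k : ℕ => ((k + M).choose M : ℝ) *
        ∏ i, ((k + a i)! * (b i)! / (k + a i + b i + 1)! : ℝ))
      (∫ x in unitCube n, (∏ i, x i ^ a i * (1 - x i) ^ b i) / (1 - ∏ i, x i) ^ (M + 1)) := by
  have : Nonempty (Fin n) :=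
    Fin.pos_iff_nonempty.mp (Nat.pos_of_ne_zero (by rintro rfl; simp at h))
  have hcube : MeasurableSet (unitCube n) := MeasurableSet.univ_pi fun _ => measurableSet_Ioo
  set F : ℕ → (Fin n → ℝ) → ℝ :=
    fun k x => ((k + M).choose M : ℝ) * ∏ i, x i ^ (k + a i) * (1 - x i) ^ b i
  have hF_int (k : ℕ) : IntegrableOn (F k) (unitCube n) :=
    (integrableOn_unitCube_prod_pow_mul_one_sub_pow _ b).const_mul _
  have hF_integral (k : ℕ) : ∫ x in unitCube n, F k x = ((k + M).choose M : ℝ) *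
      ∏ i, ((k + a i)! * (b i)! / (k + a i + b i + 1)! : ℝ) := by
    rw [integral_const_mul, setIntegral_unitCube_prod_pow_mul_one_sub_pow]
  have hF_norm (k : ℕ) : ∫ x in unitCube n, ‖F k x‖ = ∫ x in unitCube n, F k x := by
    refine setIntegral_congr_fun hcube fun x hx => Real.norm_of_nonneg ?_
    have hx' : ∀ i, x i ∈ Ioo (0 : ℝ) 1 := fun i => hx i trivial
    exact mul_nonneg (by positivity) (Finset.prod_nonneg fun i _ =>
      mul_nonneg (pow_nonneg (hx' i).1.le _) (pow_nonneg (sub_nonneg.2 (hx' i).2.le) _))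
  have hsum := hasSum_integral_of_summable_integral_norm hF_int
    (by simpa only [hF_norm, hF_integral] using summable_choose_mul_prod_factorial a b M h)
  simp only [hF_integral] at hsum
  rwa [setIntegral_congr_fun hcube fun x hx =>
    (hasSum_choose_mul_prod_pow (fun i => hx i trivial) a b M).tsum_eq] at hsum

theorem stmt17_general (n : ℕ) (u v : Fin n → ℕ)
    (hu : ∀ i, 1 ≤ u i) (hv : ∀ i, 1 ≤ v i)
    (N : ℕ) (hN : 1 ≤ N) (hsum : N + 1 ≤ ∑ i, v i) :
    Summable (fun k : ℕ => (Nat.choose (k + N - 1) (N - 1) : ℝ) *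
      ∏ i, (((v i - 1).factorial : ℝ) * ((k + u i - 1).factorial : ℝ)
        / ((k + u i + v i - 1).factorial : ℝ))) ∧
    (∫ x in unitCube n,
        (∏ i, x i ^ (u i - 1) * (1 - x i) ^ (v i - 1)) / (1 - ∏ i, x i) ^ N)
      = ∑' k : ℕ, (Nat.choose (k + N - 1) (N - 1) : ℝ) *
          ∏ i, (((v i - 1).factorial : ℝ) * ((k + u i - 1).factorial : ℝ)
            / ((k + u i + v i - 1).factorial : ℝ)) := by
  have hv' : ∑ i, (v i - 1 + 1) = ∑ i, v i :=
    Finset.sum_congr rfl fun i _ => Nat.sub_add_cancel (hv i)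
  have key := hasSum_setIntegral_unitCube (fun i => u i - 1) (fun i => v i - 1) (N - 1)
    (by rw [hv']; omega)
  rw [Nat.sub_add_cancel hN] at key
  have hterm (k : ℕ) : ((k + (N - 1)).choose (N - 1) : ℝ) *
      ∏ i, ((k + (u i - 1))! * (v i - 1)! / (k + (u i - 1) + (v i - 1) + 1)! : ℝ) =
      (Nat.choose (k + N - 1) (N - 1) : ℝ) * ∏ i, (((v i - 1).factorial : ℝ) *
        ((k + u i - 1).factorial : ℝ) / ((k + u i + v i - 1).factorial : ℝ)) := by
    rw [show k + (N - 1) = k + N - 1 by omega]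
    refine congrArg _ (Finset.prod_congr rfl fun i _ => ?_)
    rw [mul_comm, show k + (u i - 1) = k + u i - 1 by have := hu i; omega,
      show k + u i - 1 + (v i - 1) + 1 = k + u i + v i - 1 by have := hu i; have := hv i; omega]
  replace key := key.congr_fun fun k => (hterm k).symm
  exact ⟨key.summable, key.tsum_eq.symm⟩

theorem stmt17 (n : ℕ) (hn : 1 ≤ n) (u v : Fin n → ℕ)
    (hu : ∀ i, 1 ≤ u i) (hv : ∀ i, 1 ≤ v i)
    (N : ℕ) (hN : 1 ≤ N) (hsum : N + 1 ≤ ∑ i, v i) :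
    Summable (fun k : ℕ => (Nat.choose (k + N - 1) (N - 1) : ℝ) *
      ∏ i, (((v i - 1).factorial : ℝ) * ((k + u i - 1).factorial : ℝ)
        / ((k + u i + v i - 1).factorial : ℝ))) ∧
    (∫ x in unitCube n,
        (∏ i, x i ^ (u i - 1) * (1 - x i) ^ (v i - 1)) / (1 - ∏ i, x i) ^ N)
      = ∑' k : ℕ, (Nat.choose (k + N - 1) (N - 1) : ℝ) *
          ∏ i, (((v i - 1).factorial : ℝ) * ((k + u i - 1).factorial : ℝ)
            / ((k + u i + v i - 1).factorial : ℝ)) :=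
  stmt17_general n u v hu hv N hN hsum
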